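/- If G is a subgroup of the group G_n of monomial matrices, then f_1, ..., f_k are G-invariant and form a separating set for F_q[V]^G. -/

import Mathlib

/-!
For `t ∈ F` the product `∏_{a ≠ t} (t - a)` runs over all of `Fˣ`, hence equals `-1`
(Wilson's theorem for `F`). So `f_w` evaluates to `1` at `w` and to `0` elsewhere, and `f_j`
is the indicator function of the orbit `W_j`; this gives separation.

A monomial matrix `M` acts by `x_i ↦ c_i x_{σ i}` with `c_i ≠ 0` and `σ` a permutation.
Rescaling by `c ≠ 0` permutes `F ∖ {t}` onto `F ∖ {c t}` and `c ^ (q - 1) = 1`, so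
`∏_{a ≠ c t} (c x - a) = ∏_{b ≠ t} (x - b)`; hence `M` sends `f_{M v}` to `f_v`, and
summing over a `G`-stable set gives invariance of `f_j` as an identity of polynomials.
-/

open MvPolynomial

/-- The substitution action of a matrix `M` on polynomials, so that
`(polyAct M f)(v) = f (M.mulVec v)`.  Taking `M = g⁻¹` gives the action
`(g · f)(v) = f (g⁻¹ · v)` of a matrix group on the coordinate ring. -/
noncomputable def polyAct {F : Type*} [CommSemiring F] {n : ℕ}
    (M : Matrix (Fin n) (Fin n) F) (f : MvPolynomial (Fin n) F) : MvPolynomial (Fin n) F :=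
  aeval (fun i => ∑ j, C (M i j) * X j) f

/-- `f_w = (-1)^n ∏_i ∏_{a ∈ F \ {w_i}} (x_i - a)`, the indicator polynomial of `w`. -/
noncomputable def fW {F : Type*} [Field F] [Fintype F] [DecidableEq F] {n : ℕ}
    (w : Fin n → F) : MvPolynomial (Fin n) F :=
  (-1) ^ n * ∏ i, ∏ a ∈ (Finset.univ \ {w i}), (X i - C a)

/-- `f_j = ∑_{w ∈ W_j} f_w`, the indicator polynomial of the subset `W ⊆ V`. -/
noncomputable def fOrb {F : Type*} [Field F] [Fintype F] [DecidableEq F] {n : ℕ}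
    (W : Set (Fin n → F)) : MvPolynomial (Fin n) F :=
  ∑ w ∈ (Set.toFinite W).toFinset, fW w

/-- `n_j = ∏_{g ∈ G} (g · f)`, where `(g · f)(v) = f(g⁻¹ · v)`. -/
noncomputable def nInvPoly {F : Type*} [Field F] [Fintype F] {n : ℕ}
    (G : Subgroup (Matrix.GeneralLinearGroup (Fin n) F)) (f : MvPolynomial (Fin n) F) :
    MvPolynomial (Fin n) F :=
  letI : Fintype G := Fintype.ofFinite G
  ∏ g : G, polyAct (((g : Matrix.GeneralLinearGroup (Fin n) F)⁻¹ :
      Matrix.GeneralLinearGroup (Fin n) F) : Matrix (Fin n) (Fin n) F) f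

/-- The Reynolds average `h = (1/|G|) ∑_{g ∈ G} (g · f)`. -/
noncomputable def reynolds {F : Type*} [Field F] [Fintype F] {n : ℕ}
    (G : Subgroup (Matrix.GeneralLinearGroup (Fin n) F)) (f : MvPolynomial (Fin n) F) :
    MvPolynomial (Fin n) F :=
  letI : Fintype G := Fintype.ofFinite G
  C ((Nat.card G : F)⁻¹) * ∑ g : G, polyAct (((g : Matrix.GeneralLinearGroup (Fin n) F)⁻¹ :
      Matrix.GeneralLinearGroup (Fin n) F) : Matrix (Fin n) (Fin n) F) f

/-- A monomial matrix: exactly one nonzero entry in each row and in each column. -/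
def IsMonomialMatrix {F : Type*} [Zero F] {n : ℕ} (M : Matrix (Fin n) (Fin n) F) : Prop :=
  (∀ i, ∃! j, M i j ≠ 0) ∧ (∀ j, ∃! i, M i j ≠ 0)

open Finset Matrix

section FiniteField

variable {F : Type*} [Field F] [Fintype F] [DecidableEq F]

theorem prod_sdiff_singleton_sub_self (t : F) : ∏ a ∈ univ \ {t}, (t - a) = -1 := by
  calc ∏ a ∈ univ \ {t}, (t - a) = ∏ u : Fˣ, (u : F) :=
        prod_bij' (fun a ha => Units.mk0 (t - a) (by simpa [sub_eq_zero, eq_comm] using ha))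
          (fun u _ => t - u) (by simp) (by simp) (by simp) (by simp) (by simp)
    _ = -1 := by
        rw [← Units.coe_prod, FiniteField.prod_univ_units_id_eq_neg_one, Units.val_neg,
          Units.val_one]

theorem prod_sdiff_singleton_algebraMap_mul_sub {A : Type*} [CommRing A] [Algebra F A]
    (x : A) {c : F} (hc : c ≠ 0) (t : F) :
    ∏ a ∈ univ \ {c * t}, (algebraMap F A c * x - algebraMap F A a) =
      ∏ b ∈ univ \ {t}, (x - algebraMap F A b) := by
  calc ∏ a ∈ univ \ {c * t}, (algebraMap F A c * x - algebraMap F A a)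
      = ∏ b ∈ univ \ {t}, (algebraMap F A c * x - algebraMap F A (c * b)) :=
        (prod_equiv (Equiv.mulLeft₀ c hc) (by simp [hc]) (by simp)).symm
    _ = algebraMap F A (c ^ (Fintype.card F - 1)) *
          ∏ b ∈ univ \ {t}, (x - algebraMap F A b) := by
        simp [map_mul, ← mul_sub, prod_mul_distrib, card_sdiff_of_subset]
    _ = ∏ b ∈ univ \ {t}, (x - algebraMap F A b) := by
        rw [FiniteField.pow_card_sub_one_eq_one c hc, map_one, one_mul]

end FiniteField

section IndicatorPolynomials

variable {F : Type*} [Field F] [Fintype F] [DecidableEq F] {n : ℕ}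

theorem eval_fW (w v : Fin n → F) : eval v (fW w) = if v = w then 1 else 0 := by
  simp only [fW, map_mul, map_pow, map_neg, map_one, map_prod, map_sub, eval_X, eval_C]
  split_ifs with h
  · simp [h, prod_sdiff_singleton_sub_self, ← mul_pow]
  · obtain ⟨i, hi⟩ := Function.ne_iff.mp h
    exact mul_eq_zero_of_right _ <| prod_eq_zero (mem_univ i) <|
      prod_eq_zero (by simp [hi]) (sub_self (v i))

theorem eval_fOrb (W : Set (Fin n → F)) (v : Fin n → F) :
    eval v (fOrb W) = W.indicator 1 v := by
  classical
  simp [fOrb, eval_fW, Set.indicator_apply]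

end IndicatorPolynomials

theorem IsMonomialMatrix.exists_perm {R : Type*} [Zero R] {n : ℕ}
    {M : Matrix (Fin n) (Fin n) R} (hM : IsMonomialMatrix M) :
    ∃ σ : Equiv.Perm (Fin n), ∀ i j, M i j ≠ 0 ↔ j = σ i := by
  choose σ hσ hσ_unique using hM.1
  have hσ_inj : Function.Injective σ := fun i i' h => by
    obtain ⟨r, -, hr⟩ := hM.2 (σ i)
    rw [hr i (hσ i), hr i' (h ▸ hσ i')]
  refine ⟨Equiv.ofBijective σ (Finite.injective_iff_bijective.mp hσ_inj), fun i j => ?_⟩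
  exact ⟨hσ_unique i j, fun h => h ▸ hσ i⟩

section Orbits

variable {ι R : Type*} [Fintype ι] [DecidableEq ι] [CommRing R]

theorem Matrix.GeneralLinearGroup.inv_mulVec_mulVec (g : GL ι R) (w : ι → R) :
    (↑g⁻¹ : Matrix ι ι R) *ᵥ ((g : Matrix ι ι R) *ᵥ w) = w := by
  simp [mulVec_mulVec]

def mulVecOrbit (G : Subgroup (GL ι R)) (w : ι → R) : Set (ι → R) :=
  {u | ∃ g ∈ G, (g : Matrix ι ι R) *ᵥ w = u}

variable {G : Subgroup (GL ι R)} {w : ι → R}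

theorem mulVec_mem_mulVecOrbit {g : GL ι R} (hg : g ∈ G) {u : ι → R}
    (hu : u ∈ mulVecOrbit G w) : (g : Matrix ι ι R) *ᵥ u ∈ mulVecOrbit G w := by
  obtain ⟨h, hh, rfl⟩ := hu
  exact ⟨g * h, mul_mem hg hh, by simp [mulVec_mulVec]⟩

theorem mulVec_mem_mulVecOrbit_iff {g : GL ι R} (hg : g ∈ G) {u : ι → R} :
    (g : Matrix ι ι R) *ᵥ u ∈ mulVecOrbit G w ↔ u ∈ mulVecOrbit G w := by
  refine ⟨fun hgu => ?_, mulVec_mem_mulVecOrbit hg⟩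
  simpa [GeneralLinearGroup.inv_mulVec_mulVec] using mulVec_mem_mulVecOrbit (inv_mem hg) hgu

theorem exists_mulVec_eq_of_mem_mulVecOrbit {u v : ι → R} (hu : u ∈ mulVecOrbit G w)
    (hv : v ∈ mulVecOrbit G w) : ∃ g ∈ G, (g : Matrix ι ι R) *ᵥ u = v := by
  obtain ⟨h, hh, rfl⟩ := hu
  obtain ⟨h', hh', rfl⟩ := hv
  exact ⟨h' * h⁻¹, mul_mem hh' (inv_mem hh), by simp [mulVec_mulVec, mul_assoc]⟩

end Orbits

section Invariance

variable {F : Type*} [Field F] [Fintype F] [DecidableEq F] {n : ℕ}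

theorem polyAct_fW_mulVec {M : Matrix (Fin n) (Fin n) F} (hM : IsMonomialMatrix M)
    (v : Fin n → F) : polyAct M (fW (M *ᵥ v)) = fW v := by
  obtain ⟨σ, hσ⟩ := hM.exists_perm
  have hrow : ∀ i j, j ≠ σ i → M i j = 0 := fun i j hj => not_ne_iff.mp (mt (hσ i j).mp hj)
  have hmulVec : ∀ i, (M *ᵥ v) i = M i (σ i) * v (σ i) := fun i =>
    show ∑ j, M i j * v j = _ from
      sum_eq_single (σ i) (fun j _ hj => by simp [hrow i j hj]) (by simp)
  have hX : ∀ i, aeval (fun i => ∑ j, C (M i j) * X j) (X i : MvPolynomial (Fin n) F) =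
      algebraMap F _ (M i (σ i)) * X (σ i) := fun i => by
    rw [aeval_X]
    exact sum_eq_single (σ i) (fun j _ hj => by simp [hrow i j hj]) (by simp)
  simp only [polyAct, fW, map_mul, map_pow, map_neg, map_one, map_prod, map_sub, aeval_C, hX,
    hmulVec, prod_sdiff_singleton_algebraMap_mul_sub _ ((hσ _ _).mpr rfl)]
  rw [algebraMap_eq, Equiv.prod_comp σ (fun j => ∏ b ∈ univ \ {v j}, (X j - C b))]

theorem polyAct_inv_fOrb {g : GL (Fin n) F}
    (hg : IsMonomialMatrix (↑g⁻¹ : Matrix (Fin n) (Fin n) F)) {W : Set (Fin n → F)}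
    (hW : ∀ w, (g : Matrix (Fin n) (Fin n) F) *ᵥ w ∈ W ↔ w ∈ W) :
    polyAct (↑g⁻¹ : Matrix (Fin n) (Fin n) F) (fOrb W) = fOrb W := by
  rw [fOrb, polyAct, map_sum]
  refine sum_equiv (GeneralLinearGroup.toLin g).toLinearEquiv.toEquiv (by simp [hW])
    fun w _ => ?_
  conv_lhs => rw [← GeneralLinearGroup.inv_mulVec_mulVec g w]
  exact polyAct_fW_mulVec hg _

end Invariance

theorem stmt5_general {n k : ℕ} (F : Type*) [Field F] [Fintype F] [DecidableEq F]
    (G : Subgroup (Matrix.GeneralLinearGroup (Fin n) F))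
    (W : Fin k → Set (Fin n → F))
    (horb : ∀ j, ∃ w : Fin n → F, W j =
      {u | ∃ g ∈ G, (g : Matrix (Fin n) (Fin n) F).mulVec w = u})
    (hcover : ∀ v : Fin n → F, ∃ j, v ∈ W j)
    (hmono : ∀ g ∈ G, IsMonomialMatrix ((g : Matrix.GeneralLinearGroup (Fin n) F) :
        Matrix (Fin n) (Fin n) F)) :
    -- the f_j are invariants
    (∀ j, ∀ g ∈ G,
      polyAct ((g⁻¹ : Matrix.GeneralLinearGroup (Fin n) F) : Matrix (Fin n) (Fin n) F)
        (fOrb (W j)) = fOrb (W j)) ∧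
    -- and they form a separating set
    (∀ u v : Fin n → F,
      (¬ ∃ g ∈ G, (g : Matrix (Fin n) (Fin n) F).mulVec u = v) →
      ∃ j, eval u (fOrb (W j)) ≠ eval v (fOrb (W j))) := by
  have hstable :
      ∀ j, ∀ g ∈ G, ∀ w, (g : Matrix (Fin n) (Fin n) F) *ᵥ w ∈ W j ↔ w ∈ W j := by
    intro j g hg w
    obtain ⟨w₀, hW⟩ := horb j
    exact hW ▸ mulVec_mem_mulVecOrbit_iff hg
  refine ⟨fun j g hg => polyAct_inv_fOrb (hmono _ (inv_mem hg)) (hstable j g hg),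
    fun u v huv => ?_⟩
  obtain ⟨j, hu⟩ := hcover u
  have hv : v ∉ W j := by
    obtain ⟨w₀, hW⟩ := horb j
    rw [hW] at hu ⊢
    exact fun hv => huv (exists_mulVec_eq_of_mem_mulVecOrbit hu hv)
  exact ⟨j, by simp [eval_fOrb, hu, hv]⟩

/-- if `G` consists of monomial matrices, then `f_1, …, f_k` are
`G`-invariant and form a separating set for `F_q[V]^G`. -/
theorem stmt5 {q n k : ℕ} (F : Type*) [Field F] [Fintype F] [DecidableEq F]
    (hq : Fintype.card F = q)
    (G : Subgroup (Matrix.GeneralLinearGroup (Fin n) F))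
    (W : Fin k → Set (Fin n → F))
    (horb : ∀ j, ∃ w : Fin n → F, W j =
      {u | ∃ g ∈ G, (g : Matrix (Fin n) (Fin n) F).mulVec w = u})
    (hcover : ∀ v : Fin n → F, ∃ j, v ∈ W j)
    (hdisj : ∀ j₁ j₂, j₁ ≠ j₂ → Disjoint (W j₁) (W j₂))
    (hmono : ∀ g ∈ G, IsMonomialMatrix ((g : Matrix.GeneralLinearGroup (Fin n) F) :
        Matrix (Fin n) (Fin n) F)) :
    -- the f_j are invariants
    (∀ j, ∀ g ∈ G,
      polyAct ((g⁻¹ : Matrix.GeneralLinearGroup (Fin n) F) : Matrix (Fin n) (Fin n) F)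
        (fOrb (W j)) = fOrb (W j)) ∧
    -- and they form a separating set
    (∀ u v : Fin n → F,
      (¬ ∃ g ∈ G, (g : Matrix (Fin n) (Fin n) F).mulVec u = v) →
      ∃ j, eval u (fOrb (W j)) ≠ eval v (fOrb (W j))) :=
  stmt5_general F G W horb hcover hmono
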